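/- Let γ > 0, let Ω ⊆ ℝ² be open, let v : ℝ² → ℝ² be twice continuously differentiable on Ω, and let ρ : ℝ → ℝ be twice differentiable with ρ''(t) ≥ 0 and 0 ≤ ρ'(t) ≤ γ for all t ∈ ℝ. For x ∈ Ω let Dv(x) denote the 2×2 Jacobian matrix of v at x, and for s ∈ {1, 2} let ∂ₛ denote the partial derivative in the s-th coordinate direction. Then for every x ∈ Ω and s ∈ {1, 2}, the matrix-valued map F(y) := ρ'(det Dv(y))·cof Dv(y) is differentiable in the direction eₛ at x and ⟨∂ₛF(x), ∂ₛ(Dv)(x)⟩ ≥ −γ·|∂ₛ(Dv)(x)|², where ⟨·,·⟩ is the Frobenius inner product and |·| the Frobenius norm. (This is the classical-derivative form of Lemma 4.2(i) of the paper.) -/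

import Mathlib

attribute [local instance] Matrix.normedAddCommGroup Matrix.normedSpace

noncomputable section

/-- The cofactor matrix of a 2×2 real matrix (transpose of the adjugate). -/
def cof (A : Matrix (Fin 2) (Fin 2) ℝ) : Matrix (Fin 2) (Fin 2) ℝ :=
  !![A 1 1, -(A 1 0); -(A 0 1), A 0 0]

/-- The Frobenius inner product of two 2×2 real matrices. -/
def frobInner (A B : Matrix (Fin 2) (Fin 2) ℝ) : ℝ :=
  ∑ i, ∑ j, A i j * B i j

/-- The Frobenius norm of a 2×2 real matrix. -/
def frobNorm (A : Matrix (Fin 2) (Fin 2) ℝ) : ℝ :=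
  Real.sqrt (frobInner A A)

/-- The Jacobian matrix `(Dv(y))ᵢⱼ = ∂ⱼvᵢ(y)` of a map `v : ℝ² → ℝ²`. -/
def jacobian (v : EuclideanSpace ℝ (Fin 2) → EuclideanSpace ℝ (Fin 2))
    (y : EuclideanSpace ℝ (Fin 2)) : Matrix (Fin 2) (Fin 2) ℝ :=
  Matrix.of fun i j => fderiv ℝ v y (EuclideanSpace.single j 1) i

/-!
Along the line `t ↦ x + t eₛ` write `A = Dv(x)` and `H = ∂ₛ(Dv)(x)`. By the product rule and
Jacobi's formula `(det M)' = ⟨cof M, M'⟩`,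
`⟨∂ₛF(x), H⟩ = ρ''(det A) ⟨cof A, H⟩² + ρ'(det A) ⟨cof H, H⟩`.
The first term is nonnegative by convexity, and `⟨cof H, H⟩ = 2 det H ≥ -|H|²` because
`|H|² + 2 det H = (H₀₀ + H₁₁)² + (H₀₁ - H₁₀)²`; with `0 ≤ ρ' ≤ γ` this gives the bound.
-/

open Matrix

section FrobeniusAlgebra

variable (A B H : Matrix (Fin 2) (Fin 2) ℝ)

lemma frobInner_add_left : frobInner (A + B) H = frobInner A H + frobInner B H := by
  simp only [frobInner, Fin.sum_univ_two, Matrix.add_apply]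
  ring

lemma frobInner_smul_left (c : ℝ) : frobInner (c • A) H = c * frobInner A H := by
  simp only [frobInner, Fin.sum_univ_two, Matrix.smul_apply, smul_eq_mul]
  ring

lemma frobInner_cof_self : frobInner (cof H) H = 2 * H.det := by
  simp only [frobInner, cof, of_apply, cons_val', cons_val_fin_one, Fin.sum_univ_two,
    cons_val_zero, cons_val_one, det_fin_two]
  ring

lemma neg_frobInner_self_le_two_mul_det : -frobInner H H ≤ 2 * H.det := by
  simp only [frobInner, Fin.sum_univ_two, det_fin_two]
  nlinarith [sq_nonneg (H 0 0 + H 1 1), sq_nonneg (H 0 1 - H 1 0)]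

lemma frobInner_self_nonneg : 0 ≤ frobInner H H :=
  Finset.sum_nonneg fun _ _ => Finset.sum_nonneg fun _ _ => mul_self_nonneg _

lemma frobNorm_sq : frobNorm H ^ 2 = frobInner H H :=
  Real.sq_sqrt (frobInner_self_nonneg H)

lemma neg_mul_frobNorm_sq_le_frobInner_smul_cof_add {γ p q : ℝ}
    (hq : 0 ≤ q) (hp : 0 ≤ p) (hpγ : p ≤ γ) :
    -γ * frobNorm H ^ 2 ≤ frobInner ((q * frobInner (cof A) H) • cof A + p • cof H) H := by
  rw [frobInner_add_left, frobInner_smul_left, frobInner_smul_left, frobInner_cof_self,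
    frobNorm_sq]
  have hcof : -frobInner H H ≤ 2 * H.det := neg_frobInner_self_le_two_mul_det H
  have hself : 0 ≤ frobInner H H := frobInner_self_nonneg H
  nlinarith [mul_nonneg hq (sq_nonneg (frobInner (cof A) H)), mul_le_mul_of_nonneg_left hcof hp,
    mul_le_mul_of_nonneg_right hpγ hself]

end FrobeniusAlgebra

section MatrixCurves

variable {M : ℝ → Matrix (Fin 2) (Fin 2) ℝ} {M' : Matrix (Fin 2) (Fin 2) ℝ} {t : ℝ}

lemma HasDerivAt.matrix_apply (hM : HasDerivAt M M' t) (i j : Fin 2) :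
    HasDerivAt (fun t => M t i j) (M' i j) t :=
  hasDerivAt_pi.1 (hasDerivAt_pi.1 hM i) j

lemma HasDerivAt.det_fin_two (hM : HasDerivAt M M' t) :
    HasDerivAt (fun t => (M t).det) (frobInner (cof (M t)) M') t := by
  have h := ((hM.matrix_apply 0 0).fun_mul (hM.matrix_apply 1 1)).fun_sub
    ((hM.matrix_apply 0 1).fun_mul (hM.matrix_apply 1 0))
  rw [funext fun t => Matrix.det_fin_two (M t)]
  refine h.congr_deriv ?_
  simp only [frobInner, cof, of_apply, cons_val', cons_val_fin_one, Fin.sum_univ_two,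
    cons_val_zero, cons_val_one]
  ring

lemma HasDerivAt.cof (hM : HasDerivAt M M' t) : HasDerivAt (fun t => cof (M t)) (cof M') t := by
  refine hasDerivAt_pi.2 fun i => hasDerivAt_pi.2 fun j => ?_
  fin_cases i <;> fin_cases j
  exacts [hM.matrix_apply 1 1, (hM.matrix_apply 1 0).neg, (hM.matrix_apply 0 1).neg,
    hM.matrix_apply 0 0]

end MatrixCurves

lemma HasLineDerivAt.smul_cof {E : Type*} [NormedAddCommGroup E] [NormedSpace ℝ E]
    {J : E → Matrix (Fin 2) (Fin 2) ℝ} {H : Matrix (Fin 2) (Fin 2) ℝ} {x u : E}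
    {ρ' : ℝ → ℝ} {r : ℝ} (hJ : HasLineDerivAt ℝ J H x u) (hρ' : HasDerivAt ρ' r (J x).det) :
    HasLineDerivAt ℝ (fun y => ρ' (J y).det • cof (J y))
      ((r * frobInner (cof (J x)) H) • cof (J x) + ρ' (J x).det • cof H) x u := by
  have hJ0 : J (x + (0 : ℝ) • u) = J x := by simp
  rw [← hJ0] at hρ' ⊢
  rw [add_comm]
  exact (hρ'.comp 0 hJ.det_fin_two).smul hJ.cof

lemma differentiableAt_jacobian {v : EuclideanSpace ℝ (Fin 2) → EuclideanSpace ℝ (Fin 2)}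
    {x : EuclideanSpace ℝ (Fin 2)} (hv : DifferentiableAt ℝ (fderiv ℝ v) x) :
    DifferentiableAt ℝ (jacobian v) x := by
  refine differentiableAt_pi.2 fun i => differentiableAt_pi.2 fun j => ?_
  let entry : (EuclideanSpace ℝ (Fin 2) →L[ℝ] EuclideanSpace ℝ (Fin 2)) →L[ℝ] ℝ :=
    (EuclideanSpace.proj i).comp
      (ContinuousLinearMap.apply ℝ _ (EuclideanSpace.single j 1))
  exact entry.differentiableAt.comp x hv

theorem lineDeriv_rho_cof_lower_bound_general
    (γ : ℝ)
    (Ω : Set (EuclideanSpace ℝ (Fin 2))) (hΩ : IsOpen Ω)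
    (v : EuclideanSpace ℝ (Fin 2) → EuclideanSpace ℝ (Fin 2))
    (hv : ContDiffOn ℝ 2 v Ω)
    (ρ' ρ'' : ℝ → ℝ)
    (hρ'' : ∀ t, HasDerivAt ρ' (ρ'' t) t)
    (hconv : ∀ t, 0 ≤ ρ'' t)
    (hρ'_nonneg : ∀ t, 0 ≤ ρ' t) (hρ'_le : ∀ t, ρ' t ≤ γ) :
    ∀ x ∈ Ω, ∀ s : Fin 2,
      LineDifferentiableAt ℝ
        (fun y => ρ' ((jacobian v y).det) • cof (jacobian v y)) x
        (EuclideanSpace.single s 1) ∧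
      frobInner
        (lineDeriv ℝ
          (fun y => ρ' ((jacobian v y).det) • cof (jacobian v y)) x
          (EuclideanSpace.single s 1))
        (lineDeriv ℝ (jacobian v) x (EuclideanSpace.single s 1))
      ≥ -γ * (frobNorm (lineDeriv ℝ (jacobian v) x (EuclideanSpace.single s 1))) ^ 2 := by
  intro x hx s
  have hJ : HasLineDerivAt ℝ (jacobian v) (lineDeriv ℝ (jacobian v) x (EuclideanSpace.single s 1))
      x (EuclideanSpace.single s 1) := by
    have hD2v : DifferentiableAt ℝ (fderiv ℝ v) x :=
      ((hv.contDiffAt (hΩ.mem_nhds hx)).fderiv_right (m := 1) le_rfl).differentiableAt one_ne_zero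
    exact (differentiableAt_jacobian hD2v).lineDifferentiableAt.hasLineDerivAt
  have hF := hJ.smul_cof (hρ'' _)
  exact ⟨hF.lineDifferentiableAt, hF.lineDeriv ▸
    neg_mul_frobNorm_sq_le_frobInner_smul_cof_add _ _ (hconv _) (hρ'_nonneg _) (hρ'_le _)⟩

/-- Classical-derivative form of Lemma 4.2(i) of the paper: for `v` of class `C²`
on an open set `Ω ⊆ ℝ²` and `ρ : ℝ → ℝ` twice differentiable, convex
(`ρ'' ≥ 0`) with `0 ≤ ρ' ≤ γ`, the map `F(y) = ρ'(det Dv(y))·cof Dv(y)` is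
differentiable at every `x ∈ Ω` in each coordinate direction `eₛ`, and
`⟨∂ₛF(x), ∂ₛ(Dv)(x)⟩ ≥ −γ·|∂ₛ(Dv)(x)|²`. -/
theorem lineDeriv_rho_cof_lower_bound
    (γ : ℝ) (hγ : 0 < γ)
    (Ω : Set (EuclideanSpace ℝ (Fin 2))) (hΩ : IsOpen Ω)
    (v : EuclideanSpace ℝ (Fin 2) → EuclideanSpace ℝ (Fin 2))
    (hv : ContDiffOn ℝ 2 v Ω)
    (ρ ρ' ρ'' : ℝ → ℝ)
    (hρ' : ∀ t, HasDerivAt ρ (ρ' t) t)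
    (hρ'' : ∀ t, HasDerivAt ρ' (ρ'' t) t)
    (hconv : ∀ t, 0 ≤ ρ'' t)
    (hρ'_nonneg : ∀ t, 0 ≤ ρ' t) (hρ'_le : ∀ t, ρ' t ≤ γ) :
    ∀ x ∈ Ω, ∀ s : Fin 2,
      LineDifferentiableAt ℝ
        (fun y => ρ' ((jacobian v y).det) • cof (jacobian v y)) x
        (EuclideanSpace.single s 1) ∧
      frobInner
        (lineDeriv ℝ
          (fun y => ρ' ((jacobian v y).det) • cof (jacobian v y)) x
          (EuclideanSpace.single s 1))
        (lineDeriv ℝ (jacobian v) x (EuclideanSpace.single s 1))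
      ≥ -γ * (frobNorm (lineDeriv ℝ (jacobian v) x (EuclideanSpace.single s 1))) ^ 2 :=
  lineDeriv_rho_cof_lower_bound_general γ Ω hΩ v hv ρ' ρ'' hρ'' hconv hρ'_nonneg hρ'_le
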